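/- Let Y be a string with bp_{4K}(Y) > 10K. For s ∈ {−K,…,K} let Y_s = Y[K+s .. |Y|−K+s]. Then for all s, s' ∈ {−K,…,K}: ED(Y_s, Y_{s'}) = 2 · |s − s'|. -/

import Mathlib

/-!
Deleting the first `d = |s - s'|` characters of the earlier window and appending the last `d`
characters of the later one gives `ED ≤ 2d`. Conversely, since the two windows have the same
length, an alignment of cost `c < 2d` only visits diagonals whose shift lies in
`[1, 2d - 1] ⊆ [1, 4K]`. A maximal run of matched characters agrees with its translate by that
shift, so it is `4K`-periodic, and there are at most `c + 1` runs and `c` unmatched characters.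
Together with `2K` singletons outside the windows this partitions `Y` into at most
`2c + 1 + 2K < 10K` periodic blocks, contradicting `bp_{4K}(Y) > 10K`.
-/

/-- The substring of `X` with indices in `{i, ..., j-1}` (out-of-bounds indices clipped). -/
def listSub {α : Type*} (X : List α) (i j : ℕ) : List α := (X.take j).drop i

/-- Substring with possibly negative (integer) endpoints, clipped. -/
def listSubZ {α : Type*} (X : List α) (i j : ℤ) : List α := listSub X i.toNat j.toNat

/-- Costs for the Levenshtein distance (ported from the removed `Mathlib.Data.List.EditDistance.Defs`). -/
structure Levenshtein.Cost (α β δ : Type*) where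
  delete : α → δ
  insert : β → δ
  substitute : α → β → δ

/-- The default unit cost (ported from the removed Mathlib file). -/
def Levenshtein.defaultCost {α : Type*} [DecidableEq α] : Levenshtein.Cost α α ℕ where
  delete _ := 1
  insert _ := 1
  substitute a b := if a = b then 0 else 1

/-- One step of the Levenshtein dynamic program (ported from the removed Mathlib file). -/
def Levenshtein.impl {α β δ : Type*} [AddZeroClass δ] [Min δ] (C : Levenshtein.Cost α β δ)
    (xs : List α) (y : β) (d : {r : List δ // 0 < r.length}) : {r : List δ // 0 < r.length} :=
  let ⟨ds, w⟩ := d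
  xs.zip (ds.zip ds.tail) |>.foldr
    (init := ⟨[ds.getLast (List.ne_nil_of_length_pos w) + C.insert y], by simp⟩)
    (fun ⟨x, d₀, d₁⟩ ⟨r, w⟩ =>
      ⟨min (C.delete x + r[0]) (min (C.insert y + d₀) (C.substitute x y + d₁)) :: r, by simp⟩)

/-- Levenshtein distances of all suffixes (ported from the removed Mathlib file). -/
def suffixLevenshtein {α β δ : Type*} [AddZeroClass δ] [Min δ] (C : Levenshtein.Cost α β δ)
    (xs : List α) (ys : List β) : {r : List δ // 0 < r.length} :=
  ys.foldr
    (Levenshtein.impl C xs)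
    (xs.foldr (init := ⟨[0], by simp⟩) (fun a ⟨ds, _⟩ => ⟨(C.delete a + ds[0]) :: ds, by simp⟩))

/-- The Levenshtein distance (ported from the removed Mathlib file). -/
def levenshtein {α β δ : Type*} [AddZeroClass δ] [Min δ] (C : Levenshtein.Cost α β δ)
    (xs : List α) (ys : List β) : δ :=
  let ⟨r, w⟩ := suffixLevenshtein C xs ys
  r[0]

/-- Edit distance (Levenshtein distance) with unit costs. -/
def ED {α : Type*} [DecidableEq α] (X Y : List α) : ℕ :=
  levenshtein Levenshtein.defaultCost X Y

/-- `X` is periodic with period `P`: `X` is a prefix of the infinite repetition of `P`. -/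
def PeriodicWith {α : Type*} (X P : List α) : Prop :=
  P ≠ [] ∧ ∀ j, j < X.length → X[j]? = P[j % P.length]?

/-- `X` is `K`-periodic: periodic with some period of length at most `K`. -/
def IsPeriodic {α : Type*} (K : ℕ) (X : List α) : Prop :=
  ∃ P : List α, P.length ≤ K ∧ PeriodicWith X P

/-- `Y` can be partitioned into at most `L` consecutive `K`-periodic substrings. -/
def BPLe {α : Type*} (K L : ℕ) (Y : List α) : Prop :=
  ∃ Ys : List (List α), Ys.flatten = Y ∧ Ys.length ≤ L ∧ ∀ Z ∈ Ys, IsPeriodic K Z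

/-- The `K`-block periodicity of `Y`: the smallest `L` such that `Y` can be partitioned
into `L` consecutive `K`-periodic substrings. -/
noncomputable def bp {α : Type*} (K : ℕ) (Y : List α) : ℕ := sInf {L | BPLe K L Y}

/-- `Y_s = Y[K+s .. |Y|-K+s]`. -/
def shiftSub {α : Type*} (Y : List α) (K : ℕ) (s : ℤ) : List α :=
  listSubZ Y ((K : ℤ) + s) ((Y.length : ℤ) - K + s)

namespace Levenshtein

variable {α β δ : Type*} [AddZeroClass δ] [Min δ] (C : Cost α β δ)

theorem impl_cons_tail (x : α) (xs : List α) (y : β) (d e : {r : List δ // 0 < r.length})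
    (h : d.1.tail = e.1) : (impl C (x :: xs) y d).1.tail = (impl C xs y e).1 := by
  obtain ⟨_ | ⟨_, _ | ⟨_, _⟩⟩, hd⟩ := d <;> obtain ⟨e, he⟩ := e <;> subst h
  · simp at hd
  · simp at he
  · rfl

theorem suffixLevenshtein_cons₁_tail (x : α) (xs : List α) (ys : List β) :
    (suffixLevenshtein C (x :: xs) ys).1.tail = (suffixLevenshtein C xs ys).1 := by
  induction ys with
  | nil => rfl
  | cons y ys ih => exact impl_cons_tail C x xs y _ _ ih

theorem suffixLevenshtein_cons₁ (x : α) (xs : List α) (ys : List β) :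
    (suffixLevenshtein C (x :: xs) ys).1
      = levenshtein C (x :: xs) ys :: (suffixLevenshtein C xs ys).1 := by
  rw [← suffixLevenshtein_cons₁_tail C x xs ys]
  change _ = (suffixLevenshtein C (x :: xs) ys).1[0]'(suffixLevenshtein C (x :: xs) ys).2 :: _
  generalize suffixLevenshtein C (x :: xs) ys = d
  obtain ⟨_ | ⟨_, _⟩, hd⟩ := d
  · simp at hd
  · rfl

theorem levenshtein_cons_cons (x : α) (xs : List α) (y : β) (ys : List β) :
    levenshtein C (x :: xs) (y :: ys) =
      min (C.delete x + levenshtein C xs (y :: ys))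
        (min (C.insert y + levenshtein C (x :: xs) ys)
          (C.substitute x y + levenshtein C xs ys)) := by
  have h : suffixLevenshtein C (x :: xs) ys
      = ⟨levenshtein C (x :: xs) ys :: (suffixLevenshtein C xs ys).1, by simp⟩ :=
    Subtype.ext (suffixLevenshtein_cons₁ C x xs ys)
  change (impl C (x :: xs) y (suffixLevenshtein C (x :: xs) ys)).1[0]'(impl C _ y _).2
    = min (C.delete x + (impl C xs y (suffixLevenshtein C xs ys)).1[0]'(impl C xs y _).2)
        (min _ (C.substitute x y + (suffixLevenshtein C xs ys).1[0]'(suffixLevenshtein C xs ys).2))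
  rw [h]
  generalize levenshtein C (x :: xs) ys = l
  generalize suffixLevenshtein C xs ys = d
  obtain ⟨_ | ⟨_, _⟩, hd⟩ := d
  · simp at hd
  · rfl

theorem levenshtein_nil_cons (y : β) (ys : List β) :
    levenshtein C [] (y :: ys) = levenshtein C [] ys + C.insert y := by
  change (impl C [] y (suffixLevenshtein C [] ys)).1[0]'(impl C [] y _).2 = _
  have h : (suffixLevenshtein C [] ys).1 = [levenshtein C [] ys] := by
    cases ys with
    | nil => rfl
    | cons y' ys =>
      change (impl C [] y' (suffixLevenshtein C [] ys)).1
        = [(impl C [] y' (suffixLevenshtein C [] ys)).1[0]'(impl C [] y' _).2]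
      generalize suffixLevenshtein C [] ys = d
      rfl
  generalize suffixLevenshtein C [] ys = d at h
  obtain ⟨d, hd⟩ := d
  subst h
  rfl

theorem levenshtein_cons_nil (x : α) (xs : List α) :
    levenshtein C (x :: xs) [] = C.delete x + levenshtein C xs [] := rfl

end Levenshtein

open Levenshtein

section EditDistance

variable {α : Type*} [DecidableEq α]

theorem ED_nil_left (B : List α) : ED [] B = B.length := by
  induction B with
  | nil => rfl
  | cons y B ih => rw [ED, levenshtein_nil_cons, ← ED, ih]; rfl

theorem ED_nil_right (A : List α) : ED A [] = A.length := by
  induction A with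
  | nil => rfl
  | cons x A ih => rw [ED, levenshtein_cons_nil, ← ED, ih, List.length_cons, Nat.add_comm]; rfl

theorem ED_cons_cons (x y : α) (A B : List α) :
    ED (x :: A) (y :: B) =
      min (1 + ED A (y :: B)) (min (1 + ED (x :: A) B) ((if x = y then 0 else 1) + ED A B)) :=
  levenshtein_cons_cons _ x A y B

theorem ED_cons_left_le (x : α) (A B : List α) : ED (x :: A) B ≤ 1 + ED A B := by
  cases B with
  | nil => simp [ED_nil_right, Nat.add_comm]
  | cons y B => rw [ED_cons_cons]; exact min_le_left _ _

theorem ED_cons_cons_self_le (x : α) (A B : List α) : ED (x :: A) (x :: B) ≤ ED A B := by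
  rw [ED_cons_cons]
  exact (min_le_right _ _).trans ((min_le_right _ _).trans (by simp))

theorem ED_append_left_le (D A B : List α) : ED (D ++ A) B ≤ D.length + ED A B := by
  induction D with
  | nil => simp
  | cons x D ih =>
    have := ED_cons_left_le x (D ++ A) B
    simp only [List.cons_append, List.length_cons]
    omega

theorem ED_self_append_le (C I : List α) : ED C (C ++ I) ≤ I.length := by
  induction C with
  | nil => simp [ED_nil_left]
  | cons x C ih => exact (ED_cons_cons_self_le x C (C ++ I)).trans ih

theorem ED_self (A : List α) : ED A A = 0 :=
  Nat.le_zero.1 (by simpa using ED_self_append_le A [])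

theorem ED_append_append_le (D C I : List α) : ED (D ++ C) (C ++ I) ≤ D.length + I.length :=
  (ED_append_left_le D C (C ++ I)).trans (Nat.add_le_add_left (ED_self_append_le C I) _)

theorem ED_comm : ∀ A B : List α, ED A B = ED B A
  | [], B => by rw [ED_nil_left, ED_nil_right]
  | x :: A, [] => by rw [ED_nil_left, ED_nil_right]
  | x :: A, y :: B => by
    rw [ED_cons_cons, ED_cons_cons, ED_comm A (y :: B), ED_comm (x :: A) B, ED_comm A B,
      min_left_comm]
    simp only [eq_comm]

theorem length_le_length_add_ED : ∀ A B : List α, A.length ≤ B.length + ED A B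
  | [], B => by simp
  | x :: A, [] => by simp [ED_nil_right]
  | x :: A, y :: B => by
    have h₁ := length_le_length_add_ED A (y :: B)
    have h₂ := length_le_length_add_ED (x :: A) B
    have h₃ := length_le_length_add_ED A B
    rw [ED_cons_cons]
    simp only [List.length_cons] at *
    split_ifs <;> omega

end EditDistance

section Substrings

variable {α : Type*}

theorem listSub_eq_take_drop (Y : List α) (i j : ℕ) : listSub Y i j = (Y.drop i).take (j - i) :=
  List.drop_take

theorem length_listSub {Y : List α} {i j : ℕ} (hij : i ≤ j) (hj : j ≤ Y.length) :
    (listSub Y i j).length = j - i := by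
  simp only [listSub, List.length_drop, List.length_take]
  omega

theorem getElem?_listSub {Y : List α} {i j k : ℕ} (h : i + k < j) :
    (listSub Y i j)[k]? = Y[i + k]? := by
  rw [listSub, List.getElem?_drop, List.getElem?_take, if_pos h]

theorem listSub_append_listSub {Y : List α} {i j k : ℕ} (hij : i ≤ j) (hjk : j ≤ k) :
    listSub Y i j ++ listSub Y j k = listSub Y i k := by
  rw [listSub_eq_take_drop, listSub_eq_take_drop, listSub_eq_take_drop,
    show k - i = (j - i) + (k - j) by omega, List.take_add, List.drop_drop,
    show i + (j - i) = j by omega]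

theorem listSub_zero_length (Y : List α) : listSub Y 0 Y.length = Y := by
  simp [listSub]

theorem listSub_succ {Y : List α} {i : ℕ} (h : i < Y.length) : listSub Y i (i + 1) = [Y[i]] := by
  rw [listSub_eq_take_drop, Nat.add_sub_cancel_left, List.drop_eq_getElem_cons h]
  rfl

theorem listSub_eq_cons {Y : List α} {i j : ℕ} (hij : i < j) (hj : j ≤ Y.length) :
    listSub Y i j = Y[i] :: listSub Y (i + 1) j := by
  rw [← listSub_append_listSub (Nat.le_succ i) hij, listSub_succ (by omega), List.singleton_append]

theorem listSub_succ_eq_listSub_succ {Y : List α} {i j a b : ℕ} (hia : i ≤ a) (hjb : j ≤ b)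
    (ha : a < Y.length) (hb : b < Y.length) (h : listSub Y i a = listSub Y j b)
    (hab : Y[a] = Y[b]) : listSub Y i (a + 1) = listSub Y j (b + 1) := by
  rw [← listSub_append_listSub hia (Nat.le_succ a), ← listSub_append_listSub hjb (Nat.le_succ b),
    listSub_succ ha, listSub_succ hb, h, hab]

end Substrings

section BlockPeriodicity

variable {α : Type*} {K : ℕ}

theorem BPLe.mono {L L' : ℕ} {X : List α} (h : BPLe K L X) (hL : L ≤ L') : BPLe K L' X :=
  let ⟨Xs, hflat, hlen, hper⟩ := h
  ⟨Xs, hflat, hlen.trans hL, hper⟩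

theorem BPLe.append {L L' : ℕ} {X X' : List α} (h : BPLe K L X) (h' : BPLe K L' X') :
    BPLe K (L + L') (X ++ X') := by
  obtain ⟨Xs, rfl, hlen, hper⟩ := h
  obtain ⟨Xs', rfl, hlen', hper'⟩ := h'
  refine ⟨Xs ++ Xs', List.flatten_append, by simp only [List.length_append]; omega, ?_⟩
  simpa only [List.mem_append] using fun Z hZ => hZ.elim (hper Z) (hper' Z)

theorem bpLe_length (hK : 1 ≤ K) (X : List α) : BPLe K X.length X := by
  refine ⟨X.map ([·]), by induction X <;> simp [*], by simp, ?_⟩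
  simp only [List.mem_map]
  rintro _ ⟨x, -, rfl⟩
  exact ⟨[x], hK, List.cons_ne_nil x [], by simp⟩

theorem bp_le_of_bpLe {L : ℕ} {X : List α} (h : BPLe K L X) : bp K X ≤ L :=
  Nat.sInf_le h

theorem bp_le_length (hK : 1 ≤ K) (X : List α) : bp K X ≤ X.length :=
  bp_le_of_bpLe (bpLe_length hK X)

end BlockPeriodicity

section Periodicity

variable {α : Type*} {Y : List α} {K : ℕ}

theorem getElem?_add_eq_getElem?_add_mod {i k t : ℕ}
    (hmatch : ∀ l < k, Y[i + l]? = Y[i + t + l]?) : ∀ l < k, Y[i + l]? = Y[i + l % t]? := by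
  obtain rfl | ht := Nat.eq_zero_or_pos t
  · simp
  intro l hl
  induction l using Nat.strong_induction_on with
  | _ l ih =>
    by_cases hlt : l < t
    · rw [Nat.mod_eq_of_lt hlt]
    · rw [Nat.mod_eq_sub_mod (by omega), ← ih (l - t) (by omega) (by omega),
        hmatch (l - t) (by omega), show i + t + (l - t) = i + l by omega]

theorem bpLe_one_listSub_of_eq_listSub {i j a b : ℕ} (hab : a < b) (hbK : b ≤ a + K)
    (hia : i ≤ a) (hjb : j ≤ b) (hb : b ≤ Y.length) (h : listSub Y i a = listSub Y j b) :
    BPLe K 1 (listSub Y i a) := by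
  have hlen := congrArg List.length h
  rw [length_listSub hia (by omega), length_listSub hjb hb] at hlen
  rcases Nat.eq_or_lt_of_le hia with rfl | hia'
  · exact ⟨[], by simp [listSub], by simp, by simp⟩
  have hmatch : ∀ l < a - i, Y[i + l]? = Y[i + (b - a) + l]? := fun l hl => by
    rw [← getElem?_listSub (j := a) (by omega), h, getElem?_listSub (by omega),
      show i + (b - a) + l = j + l by omega]
  have hperiod : (listSub Y i (i + (b - a))).length = b - a := by
    rw [length_listSub] <;> omega
  refine ⟨[listSub Y i a], by simp, le_rfl, ?_⟩
  simp only [List.mem_singleton, forall_eq]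
  refine ⟨listSub Y i (i + (b - a)), by omega, List.ne_nil_of_length_pos (by omega), fun l hl => ?_⟩
  rw [length_listSub hia (by omega)] at hl
  rw [hperiod, getElem?_listSub (by omega), getElem?_listSub (by
    have := Nat.mod_lt l (show 0 < b - a by omega); omega)]
  exact getElem?_add_eq_getElem?_add_mod hmatch l hl

end Periodicity

section Alignment

variable {α : Type*} [DecidableEq α]

/-- Every diagonal `τ` that a path of at most `c` deletions, insertions and substitutions
from diagonal `σ` to diagonal `σ'` of the edit-distance grid can visit lies in `[1, P]`. -/
def ShiftsWithin (P : ℕ) (σ σ' : ℤ) (c : ℕ) : Prop :=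
  ∀ τ : ℤ, σ + σ' - c ≤ 2 * τ → 2 * τ ≤ σ + σ' + c → 1 ≤ τ ∧ τ ≤ P

theorem ShiftsWithin.of_step {P c c' : ℕ} {σ₁ σ₂ σ' : ℤ} (h : ShiftsWithin P σ₁ σ' c)
    (hlo : σ₁ - c ≤ σ₂ - c') (hhi : σ₂ + c' ≤ σ₁ + c) : ShiftsWithin P σ₂ σ' c' :=
  fun τ h₁ h₂ => h τ (by omega) (by omega)

/-- `Y[i..a] = Y[j..b]` have been matched and `Y[a..e]` is aligned with `Y[b..f]` at cost at most
`c`. Each maximal run of matches lies on one diagonal `τ ∈ [1, P]`, so it is a `P`-periodic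
block, and every other character of `Y[i..e]` is a singleton block charged to an edit. -/
theorem bpLe_listSub_of_ED_le {Y : List α} {P : ℕ} (c : ℕ) {i j a b e f : ℕ}
    (hia : i ≤ a) (hjb : j ≤ b) (hae : a ≤ e) (hbf : b ≤ f) (he : e ≤ Y.length) (hf : f ≤ Y.length)
    (hmatch : listSub Y i a = listSub Y j b) (hED : ED (listSub Y a e) (listSub Y b f) ≤ c)
    (hshift : ShiftsWithin P ((b : ℤ) - a) ((f : ℤ) - e) c) :
    BPLe P (2 * c + 1) (listSub Y i e) := by
  have hlen₁ := length_le_length_add_ED (listSub Y a e) (listSub Y b f)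
  have hlen₂ := length_le_length_add_ED (listSub Y b f) (listSub Y a e)
  rw [ED_comm] at hlen₂
  rw [length_listSub hae he, length_listSub hbf hf] at hlen₁ hlen₂
  obtain ⟨hσ₁, hσP⟩ := hshift (b - a) (by omega) (by omega)
  have hblock : BPLe P 1 (listSub Y i a) :=
    bpLe_one_listSub_of_eq_listSub (by omega) (by omega) hia hjb (by omega) hmatch
  have hsplit : listSub Y i e = listSub Y i a ++ listSub Y a e :=
    (listSub_append_listSub hia hae).symm
  rcases Nat.eq_or_lt_of_le hae with rfl | hae'
  · exact hblock.mono (by omega)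
  rcases Nat.eq_or_lt_of_le hbf with rfl | hbf'
  · have hrest := bpLe_length (K := P) (by omega) (listSub Y a e)
    rw [length_listSub hae he] at hrest
    rw [hsplit]
    exact (hblock.append hrest).mono (by omega)
  have hx : BPLe P 1 (listSub Y a (a + 1)) := (bpLe_length (by omega) _).mono
    (by rw [length_listSub (Nat.le_succ a) (by omega)]; omega)
  have hsplit' : listSub Y a e = listSub Y a (a + 1) ++ listSub Y (a + 1) e :=
    (listSub_append_listSub (Nat.le_succ a) hae').symm
  have hempty (p : ℕ) : listSub Y p p = [] := by simp [listSub]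
  have hcases := hED
  rw [listSub_eq_cons hae' he, listSub_eq_cons hbf' hf, ED_cons_cons] at hcases
  rcases min_le_iff.1 hcases with hdel | hcases
  · rw [← listSub_eq_cons hbf' hf] at hdel
    have hrest := bpLe_listSub_of_ED_le (c - 1) (i := a + 1) (a := a + 1) le_rfl le_rfl hae' hbf he hf
      (by rw [hempty, hempty]) (by omega) (hshift.of_step (by omega) (by omega))
    rw [hsplit, hsplit']
    exact (hblock.append (hx.append hrest)).mono (by omega)
  rcases min_le_iff.1 hcases with hins | hsub
  · rw [← listSub_eq_cons hae' he] at hins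
    have hrest := bpLe_listSub_of_ED_le (c - 1) (j := b + 1) (b := b + 1) le_rfl le_rfl hae hbf' he hf
      (by rw [hempty, hempty]) (by omega) (hshift.of_step (by omega) (by omega))
    rw [hsplit]
    exact (hblock.append hrest).mono (by omega)
  by_cases hxy : Y[a] = Y[b]
  · rw [if_pos hxy, Nat.zero_add] at hsub
    exact bpLe_listSub_of_ED_le c (by omega) (by omega) hae' hbf' he hf
      (listSub_succ_eq_listSub_succ hia hjb (by omega) (by omega) hmatch hxy) hsub
      (hshift.of_step (by omega) (by omega))
  · rw [if_neg hxy] at hsub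
    have hrest := bpLe_listSub_of_ED_le (c - 1) (i := a + 1) (j := b + 1) (a := a + 1) (b := b + 1)
      le_rfl le_rfl hae' hbf' he hf
      (by rw [hempty, hempty]) (by omega) (hshift.of_step (by omega) (by omega))
    rw [hsplit, hsplit']
    exact (hblock.append (hx.append hrest)).mono (by omega)
termination_by e - a + (f - b)

end Alignment

section RandomLike

variable {α : Type*} [DecidableEq α]

theorem ED_listSub_le {Y : List α} {u v n : ℕ} (huv : u ≤ v) (hvn : v ≤ u + n)
    (hn : v + n ≤ Y.length) : ED (listSub Y u (u + n)) (listSub Y v (v + n)) ≤ 2 * (v - u) := by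
  rw [← listSub_append_listSub huv hvn, ← listSub_append_listSub hvn (by omega : u + n ≤ v + n)]
  refine (ED_append_append_le _ _ _).trans ?_
  rw [length_listSub huv (by omega), length_listSub (by omega) hn]
  omega

theorem le_ED_listSub {Y : List α} {K u v n : ℕ} (hbp : 10 * K < bp (4 * K) Y)
    (hn : n + 2 * K = Y.length) (huv : u ≤ v) (hv : v ≤ 2 * K) :
    2 * (v - u) ≤ ED (listSub Y u (u + n)) (listSub Y v (v + n)) := by
  by_contra! hlt
  have hmid := bpLe_listSub_of_ED_le (Y := Y) (P := 4 * K) (2 * (v - u) - 1) le_rfl le_rfl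
    (Nat.le_add_right u n) (Nat.le_add_right v n) (by omega) (by omega) (by simp [listSub]) (by omega)
    (fun τ h₁ h₂ => by push_cast at h₁ h₂ ⊢; omega)
  have hK : 1 ≤ 4 * K := by omega
  have hpre := bpLe_length hK (listSub Y 0 u)
  have hsuf := bpLe_length hK (listSub Y (u + n) Y.length)
  rw [length_listSub (by omega) (by omega)] at hpre hsuf
  have hY := bp_le_of_bpLe ((hpre.append hmid).append hsuf)
  rw [listSub_append_listSub (by omega) (by omega), listSub_append_listSub (by omega) (by omega),
    listSub_zero_length] at hY
  omega

theorem ED_listSub_eq {Y : List α} {K u v n : ℕ} (hbp : 10 * K < bp (4 * K) Y)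
    (hn : n + 2 * K = Y.length) (hKn : 2 * K ≤ n) (huv : u ≤ v) (hv : v ≤ 2 * K) :
    ED (listSub Y u (u + n)) (listSub Y v (v + n)) = 2 * (v - u) :=
  le_antisymm (ED_listSub_le huv (by omega) (by omega)) (le_ED_listSub hbp hn huv hv)

end RandomLike

theorem shiftSub_eq_listSub {α : Type*} {Y : List α} {K : ℕ} {s : ℤ} (hs : -(K : ℤ) ≤ s)
    (hY : 2 * K ≤ Y.length) :
    shiftSub Y K s = listSub Y (K + s).toNat ((K + s).toNat + (Y.length - 2 * K)) := by
  rw [shiftSub, listSubZ]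
  congr 1
  omega

/-- Random-like rule: if `bp_{4K}(Y) > 10K`, then for all shifts `s, s' ∈ {-K, ..., K}`
we have `ED(Y_s, Y_{s'}) = 2·|s - s'|`. -/
theorem random_like_rule {α : Type*} [DecidableEq α]
    (Y : List α) (K : ℕ) (hbp : 10 * K < bp (4 * K) Y)
    (s s' : ℤ) (hs1 : -(K : ℤ) ≤ s) (hs2 : s ≤ K) (hs'1 : -(K : ℤ) ≤ s') (hs'2 : s' ≤ K) :
    ED (shiftSub Y K s) (shiftSub Y K s') = 2 * (s - s').natAbs := by
  obtain rfl | hK := Nat.eq_zero_or_pos K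
  · obtain rfl : s = s' := by omega
    simp [ED_self]
  have hY : 10 * K < Y.length := hbp.trans_le (bp_le_length (by omega) Y)
  rw [shiftSub_eq_listSub hs1 (by omega), shiftSub_eq_listSub hs'1 (by omega)]
  rcases le_total s s' with h | h
  · rw [ED_listSub_eq hbp (by omega) (by omega) (by omega) (by omega)]
    omega
  · rw [ED_comm, ED_listSub_eq hbp (by omega) (by omega) (by omega) (by omega)]
    omega
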